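/- Let m = n + k. Let L ∈ ℂ^{m×m} be a proper unitary k-lower Hessenberg matrix and R ∈ ℂ^{m×m} a proper unitary k-upper Hessenberg matrix. Let U = diag(I_k, Û) with Û ∈ ℂ^{n×n} unitary, let Z ∈ ℂ^{m×k}, E = [I_k; 0] ∈ ℂ^{m×k}, and F = U + E Z*. Suppose the matrix Â = L F R has its last k rows equal to zero. Then A := Â(1:n, 1:n) is nonsingular and A has the same staircase profile as Û, i.e. m_j(A) = m_j(Û) for 1 ≤ j ≤ n. -/

import Mathlib

open Matrix

/-- A matrix is `k`-upper Hessenberg if its entries vanish below the `k`-th subdiagonal. -/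
def IsKUpperHessenberg {m : ℕ} (k : ℕ) (R : Matrix (Fin m) (Fin m) ℂ) : Prop :=
  ∀ i j : Fin m, (j : ℕ) + k < (i : ℕ) → R i j = 0

/-- A matrix is `k`-lower Hessenberg if its entries vanish above the `k`-th superdiagonal. -/
def IsKLowerHessenberg {m : ℕ} (k : ℕ) (L : Matrix (Fin m) (Fin m) ℂ) : Prop :=
  ∀ i j : Fin m, (i : ℕ) + k < (j : ℕ) → L i j = 0

/-- The entry `A_{ij}` of a matrix in 1-based indexing (zero outside the index range). -/
def entry1 {n : ℕ} (A : Matrix (Fin n) (Fin n) ℂ) (i j : ℕ) : ℂ :=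
  if h : 1 ≤ i ∧ i ≤ n ∧ 1 ≤ j ∧ j ≤ n then A ⟨i - 1, by omega⟩ ⟨j - 1, by omega⟩ else 0

open Classical in
/-- The (lower) staircase sequence `m_j(A)` of a matrix, with `m_0(A) = 0` and
`m_j(A) = max (m_{j-1}(A)) (max {i : i > j and A_{ij} ≠ 0})` (1-based indices). -/
noncomputable def staircase {n : ℕ} (A : Matrix (Fin n) (Fin n) ℂ) : ℕ → ℕ
  | 0 => 0
  | j + 1 =>
    max (staircase A j)
      ((Finset.range (n + 1)).sup fun i =>
        if j + 1 < i ∧ entry1 A i (j + 1) ≠ 0 then i else 0)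

/-!
Write `P` for the block of `Lᴴ` with rows `k+1, …, n+k` and columns `1, …, n`, and `Q` for the
same block of `R`. Since `L` is unitary, `Lᴴ Â = F R`; the vanishing last rows of `Â` reduce the
left side on this block to `P A`, while row `i + k` of `F` is row `i` of `diag(I_k, Û)`, so the
right side is `Û Q`. Thus `P A = Û Q`. Properness of the Hessenberg matrices makes `P` and `Q`
upper triangular with nonzero diagonal, hence invertible, which gives nonsingularity of `A`; and
multiplying by upper triangular matrices on either side can only shrink the zero region described
by the staircase, so `A = P⁻¹ Û Q` and `Û = P A Q⁻¹` have the same staircase.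
-/

theorem isUnit_det_of_isUpperTriangular {K m : Type*} [Field K] [Fintype m] [DecidableEq m]
    [LinearOrder m] {M : Matrix m m K} (hM : M.IsUpperTriangular) (hdiag : ∀ i, M i i ≠ 0) :
    IsUnit M.det := by
  rw [det_of_isUpperTriangular hM, isUnit_iff_ne_zero]
  exact Finset.prod_ne_zero_iff.2 fun i _ => hdiag i

theorem Matrix.submatrix_mul_of_injective {l m o l' m' o' α : Type*} [Fintype m] [Fintype m']
    [NonUnitalNonAssocSemiring α] (M : Matrix l m α) (N : Matrix m o α) (r : l' → l)
    {e : m' → m} (c : o' → o) (he : e.Injective)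
    (h : ∀ i j, ∀ x ∉ Set.range e, M (r i) x * N x (c j) = 0) :
    (M * N).submatrix r c = M.submatrix r e * N.submatrix e c := by
  ext i j
  exact (Fintype.sum_of_injective e he _ _ (h i j) fun _ => rfl).symm

section Staircase

variable {n : ℕ}

lemma entry1_val_succ (M : Matrix (Fin n) (Fin n) ℂ) (i j : Fin n) :
    entry1 M (i + 1) (j + 1) = M i j := by
  simp [entry1]

lemma staircase_succ_le_iff (M : Matrix (Fin n) (Fin n) ℂ) (j r : ℕ) :
    staircase M (j + 1) ≤ r ↔
      staircase M j ≤ r ∧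
        ∀ i l : Fin n, (l : ℕ) = j → (l : ℕ) < i → r ≤ (i : ℕ) → M i l = 0 := by
  simp only [staircase, max_le_iff, Finset.sup_le_iff, Finset.mem_range]
  refine and_congr_right fun _ => ⟨fun h i l hl hli hri => ?_, fun h i hi => ?_⟩
  · by_contra hne
    have := h (i + 1) (by omega)
    rw [if_pos ⟨by omega, by rwa [← hl, entry1_val_succ]⟩] at this
    omega
  · split_ifs with hc
    · obtain ⟨i', rfl⟩ : ∃ i', i = i' + 1 := ⟨i - 1, by omega⟩
      by_contra hri
      exact hc.2 ((entry1_val_succ M ⟨i', by omega⟩ ⟨j, by omega⟩).trans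
        (h _ _ rfl (by simp only; omega) (by simp only; omega)))
    · exact Nat.zero_le r

/-- The staircase bound `m_j(M) ≤ r` says that, in the first `j` columns, every entry strictly
below the diagonal in a row with (1-based) index greater than `r` vanishes. -/
theorem staircase_le_iff (M : Matrix (Fin n) (Fin n) ℂ) (j r : ℕ) :
    staircase M j ≤ r ↔
      ∀ i l : Fin n, (l : ℕ) < j → (l : ℕ) < i → r ≤ (i : ℕ) → M i l = 0 := by
  induction j with
  | zero => simp [staircase]
  | succ j ih =>
    rw [staircase_succ_le_iff, ih]
    refine ⟨fun ⟨hlt, heq⟩ i l hl => ?_, fun h => ⟨fun i l hl => h i l (by omega),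
      fun i l hl => h i l (by omega)⟩⟩
    rcases Nat.lt_succ_iff_lt_or_eq.1 hl with hl | hl
    exacts [hlt i l hl, heq i l hl]

theorem staircase_mul_mul_le {M P Q : Matrix (Fin n) (Fin n) ℂ} (hP : P.IsUpperTriangular)
    (hQ : Q.IsUpperTriangular) (j : ℕ) : staircase (P * M * Q) j ≤ staircase M j := by
  have hM := (staircase_le_iff M j _).1 le_rfl
  refine (staircase_le_iff _ j _).2 fun i l hlj hli hri => ?_
  rw [mul_apply]
  refine Finset.sum_eq_zero fun b _ => ?_
  rcases lt_or_ge l b with hlb | hbl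
  · rw [hQ hlb, mul_zero]
  rw [mul_apply, Finset.sum_eq_zero fun a _ => ?_, zero_mul]
  rcases lt_or_ge a i with hai | hia
  · rw [hP hai, zero_mul]
  · rw [Fin.le_def] at hbl hia
    rw [hM a b (by omega) (by omega) (by omega), mul_zero]

theorem staircase_eq_of_mul_eq_mul {A B P Q : Matrix (Fin n) (Fin n) ℂ}
    (hP : P.IsUpperTriangular) (hQ : Q.IsUpperTriangular)
    (hPdet : IsUnit P.det) (hQdet : IsUnit Q.det) (h : P * A = B * Q) (j : ℕ) :
    staircase A j = staircase B j := by
  have := P.invertibleOfIsUnitDet hPdet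
  have := Q.invertibleOfIsUnitDet hQdet
  have hA : A = P⁻¹ * B * Q := by
    rw [Matrix.mul_assoc, ← h, ← Matrix.mul_assoc, inv_mul_of_invertible, Matrix.one_mul]
  have hB : B = P * A * Q⁻¹ := by rw [h, mul_inv_cancel_right_of_invertible]
  refine le_antisymm ?_ ?_
  · rw [hA]
    exact staircase_mul_mul_le (blockTriangular_inv_of_blockTriangular hP) hQ j
  · rw [hB]
    exact staircase_mul_mul_le hP (blockTriangular_inv_of_blockTriangular hQ) j

end Staircase

theorem IsKLowerHessenberg.conjTranspose {m k : ℕ} {L : Matrix (Fin m) (Fin m) ℂ}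
    (h : IsKLowerHessenberg k L) : IsKUpperHessenberg k Lᴴ := fun i j hij => by
  rw [conjTranspose_apply, h j i hij, star_zero]

theorem IsKUpperHessenberg.isUpperTriangular_submatrix {n k : ℕ}
    {R : Matrix (Fin (n + k)) (Fin (n + k)) ℂ} (h : IsKUpperHessenberg k R) :
    (R.submatrix (Fin.addNat · k) (Fin.castAdd k)).IsUpperTriangular := fun i j hji =>
  h _ _ (by simp only [id, Fin.lt_def] at hji; simp only [Fin.val_addNat, Fin.val_castAdd]; omega)

/-- `diag(I_k, Û)`. -/
def blockDiagIdentity {n : ℕ} (k : ℕ) (Uhat : Matrix (Fin n) (Fin n) ℂ) :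
    Matrix (Fin (n + k)) (Fin (n + k)) ℂ :=
  Matrix.of fun i j : Fin (n + k) =>
    if hik : (i : ℕ) < k then (if (i : ℕ) = (j : ℕ) then 1 else 0)
    else if hjk : (j : ℕ) < k then 0
    else Uhat (i.subNat k (not_lt.1 hik)) (j.subNat k (not_lt.1 hjk))

/-- `E = [I_k; 0]`. -/
def identityTop (n k : ℕ) : Matrix (Fin (n + k)) (Fin k) ℂ :=
  Matrix.of fun i j => if (i : ℕ) = j then 1 else 0

theorem blockDiagIdentity_add_identityTop_mul_addNat_apply {n k : ℕ}
    (Uhat : Matrix (Fin n) (Fin n) ℂ) (Z : Matrix (Fin (n + k)) (Fin k) ℂ) (i : Fin n)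
    (x : Fin (n + k)) :
    (blockDiagIdentity k Uhat + identityTop n k * Zᴴ) (i.addNat k) x =
      if h : k ≤ (x : ℕ) then Uhat i (x.subNat k h) else 0 := by
  have hE : (identityTop n k * Zᴴ) (i.addNat k) x = 0 := by
    refine (mul_apply ..).trans (Finset.sum_eq_zero fun t _ => ?_)
    rw [identityTop, of_apply, if_neg (by simp only [Fin.val_addNat]; omega), zero_mul]
  rw [Matrix.add_apply, hE, add_zero]
  by_cases hx : k ≤ (x : ℕ)
  · simp [blockDiagIdentity, hx, Fin.subNat, not_lt.2 hx]
  · simp [blockDiagIdentity, hx]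

theorem conjTranspose_submatrix_mul_submatrix_eq {n k : ℕ} {L R F Ahat : Matrix (Fin (n + k)) (Fin (n + k)) ℂ}
    {Uhat : Matrix (Fin n) (Fin n) ℂ} (hL : star L * L = 1) (hAhat : Ahat = L * F * R)
    (hlast : ∀ i j : Fin (n + k), n ≤ (i : ℕ) → Ahat i j = 0)
    (hF : ∀ (i : Fin n) (x : Fin (n + k)),
      F (i.addNat k) x = if h : k ≤ (x : ℕ) then Uhat i (x.subNat k h) else 0) :
    Lᴴ.submatrix (Fin.addNat · k) (Fin.castAdd k) *
        Ahat.submatrix (Fin.castAdd k) (Fin.castAdd k) =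
      Uhat * R.submatrix (Fin.addNat · k) (Fin.castAdd k) := by
  have hLA : Lᴴ * Ahat = F * R := by
    rw [hAhat, Matrix.mul_assoc, ← Matrix.mul_assoc Lᴴ, ← star_eq_conjTranspose, hL,
      Matrix.one_mul]
  have hFU : F.submatrix (Fin.addNat · k) (Fin.addNat · k) = Uhat := by
    ext i j
    simp [hF]
  rw [← submatrix_mul_of_injective _ _ _ _ (Fin.castAdd_injective n k), hLA,
    submatrix_mul_of_injective _ _ _ _ ((Fin.strictMono_addNat k).injective), hFU]
  · intro i j x hx
    rw [hF, dif_neg fun h => hx ⟨x.subNat k h, Fin.addNat_subNat h⟩, zero_mul]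
  · intro i j x hx
    rw [hlast x _ (not_lt.1 fun h => hx ⟨x.castLT h, Fin.castAdd_castLT k x h⟩), mul_zero]

theorem staircase_of_bordered_LFR {n k : ℕ}
    (L R U F Ahat : Matrix (Fin (n + k)) (Fin (n + k)) ℂ)
    (Uhat : Matrix (Fin n) (Fin n) ℂ)
    (Z : Matrix (Fin (n + k)) (Fin k) ℂ)
    (A : Matrix (Fin n) (Fin n) ℂ)
    (hL : L ∈ Matrix.unitaryGroup (Fin (n + k)) ℂ)
    (hLHess : IsKLowerHessenberg k L)
    (hLproper : ∀ (j : ℕ) (h : j + k < n + k), L ⟨j, by omega⟩ ⟨j + k, h⟩ ≠ 0)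
    (hRHess : IsKUpperHessenberg k R)
    (hRproper : ∀ (j : ℕ) (h : j + k < n + k), R ⟨j + k, h⟩ ⟨j, by omega⟩ ≠ 0)
    (hUhat : Uhat ∈ Matrix.unitaryGroup (Fin n) ℂ)
    (hU : U = Matrix.of fun i j : Fin (n + k) =>
      if (i : ℕ) < k then (if (i : ℕ) = (j : ℕ) then (1 : ℂ) else 0)
      else if hjk : (j : ℕ) < k then 0
      else Uhat ⟨(i : ℕ) - k, by have := i.isLt; omega⟩ ⟨(j : ℕ) - k, by have := j.isLt; omega⟩)
    (hF : F = U + (Matrix.of fun (i : Fin (n + k)) (j : Fin k) =>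
      if (i : ℕ) = (j : ℕ) then (1 : ℂ) else 0) * Zᴴ)
    (hAhat : Ahat = L * F * R)
    (hlast : ∀ (i : Fin (n + k)) (j : Fin (n + k)), n ≤ (i : ℕ) → Ahat i j = 0)
    (hA : A = Ahat.submatrix (Fin.castAdd k) (Fin.castAdd k)) :
    IsUnit A.det ∧ ∀ j : ℕ, 1 ≤ j → j ≤ n → staircase A j = staircase Uhat j := by
  set P := Lᴴ.submatrix (Fin.addNat · k) (Fin.castAdd k)
  set Q := R.submatrix (Fin.addNat · k) (Fin.castAdd k)
  have hP : P.IsUpperTriangular := hLHess.conjTranspose.isUpperTriangular_submatrix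
  have hQ : Q.IsUpperTriangular := hRHess.isUpperTriangular_submatrix
  have hPdet : IsUnit P.det :=
    isUnit_det_of_isUpperTriangular hP fun i => star_ne_zero.2 (hLproper i (by omega))
  have hQdet : IsUnit Q.det := isUnit_det_of_isUpperTriangular hQ fun i => hRproper i (by omega)
  have hFU : F = blockDiagIdentity k Uhat + identityTop n k * Zᴴ := by subst hU; exact hF
  have key : P * A = Uhat * Q := hA ▸ conjTranspose_submatrix_mul_submatrix_eq hL.1 hAhat hlast
    (hFU ▸ blockDiagIdentity_add_identityTop_mul_addNat_apply Uhat Z)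
  have hdet : P.det * A.det = Uhat.det * Q.det := by rw [← det_mul, key, det_mul]
  exact ⟨isUnit_of_mul_isUnit_right (hdet ▸ (isUnit_det_of_left_inverse hUhat.1).mul hQdet),
    fun j _ _ => staircase_eq_of_mul_eq_mul hP hQ hPdet hQdet key j⟩
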